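/- Let n ≥ 4 and let C be the (n−1)×(n−1) circulant matrix circ(1,0,…,0,−1) (first entry 1, last entry −1, all other entries 0 in its defining vector). Let N be the n×2(n−1) block matrix N = [[𝟏ᵀ, 0ᵀ],[−I_{n−1}, C]] (an oriented incidence matrix of the wheel graph W_n), let X = (CCᵀ + I_{n−1})⁻¹(J_{n−1} − n·I_{n−1}), Y = −CᵀX, and H = (1/n) · [[𝟏, X],[0, Y]]. Then H is the Moore–Penrose inverse of N, i.e. N H N = N, H N H = H, (N H)ᵀ = N H, and (H N)ᵀ = H N. -/

import Mathlib

open Matrix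

noncomputable section

/-- The circulant matrix of order `m` with defining vector `v`:
its `(i,j)` entry is `v ((j - i) mod m)`. -/
def circ {m : ℕ} (v : Fin m → ℝ) : Matrix (Fin m) (Fin m) ℝ :=
  Matrix.of fun i j => v (j - i)

/-- The `m × m` all-ones matrix. -/
def Jmat (m : ℕ) : Matrix (Fin m) (Fin m) ℝ := Matrix.of fun _ _ => 1

/-!
The argument works for any `C` whose columns sum to zero, as do those of a circulant matrix with
zero-sum defining vector. Then `A = C Cᵀ + 1` is positive definite and fixes the all-ones vector,
so `X = A⁻¹ (J - n) = J - n A⁻¹` is symmetric with row sums `-1`. A block computation gives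
`N H = 1 - J / n`, the orthogonal projection onto the complement of the all-ones vector, and shows
that `H N` is symmetric. Since the columns of `N` and the rows of `H` sum to zero, the projection
is absorbed both in `(N H) N = N` and in `H (N H) = H`.
-/

def IsMoorePenroseInverse {m n : Type*} [Fintype m] [Fintype n] (N : Matrix m n ℝ)
    (H : Matrix n m ℝ) : Prop :=
  N * H * N = N ∧ H * N * H = H ∧ (N * H)ᵀ = N * H ∧ (H * N)ᵀ = H * N

local notation "𝟏" => Matrix.of fun _ _ => (1 : ℝ)

section AllOnes

variable {α β γ δ : Type*}

lemma transpose_ones : (𝟏 : Matrix α β ℝ)ᵀ = 𝟏 := rfl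

lemma fromBlocks_ones : fromBlocks 𝟏 𝟏 𝟏 𝟏 = (𝟏 : Matrix (α ⊕ β) (γ ⊕ δ) ℝ) := by
  ext (i | i) (j | j) <;> rfl

lemma mul_ones [Fintype β] (A : Matrix α β ℝ) :
    A * (𝟏 : Matrix β γ ℝ) = of fun i _ => (A *ᵥ 1) i := by
  ext; simp [mul_apply, mulVec, dotProduct]

lemma ones_mul [Fintype α] (A : Matrix α β ℝ) :
    (𝟏 : Matrix γ α ℝ) * A = of fun _ j => (1 ᵥ* A) j := by
  ext; simp [mul_apply, vecMul, dotProduct]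

lemma ones_mul_ones [Fintype β] :
    (𝟏 : Matrix α β ℝ) * (𝟏 : Matrix β γ ℝ) = (Fintype.card β : ℝ) • 𝟏 := by
  ext; simp [mul_apply]

lemma ones_mulVec_one [Fintype β] : (𝟏 : Matrix α β ℝ) *ᵥ 1 = (Fintype.card β : ℝ) • 1 := by
  ext; simp [mulVec, dotProduct]

lemma one_vecMul_ones [Fintype α] :
    (1 : α → ℝ) ᵥ* (𝟏 : Matrix α β ℝ) = (Fintype.card α : ℝ) • 1 := by
  ext; simp [vecMul, dotProduct]

end AllOnes

section Cone

variable {ι : Type*} [Fintype ι] {C X : Matrix ι ι ℝ}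

lemma fromBlocks_mulVec_one (hcol : 1 ᵥ* C = 0) (hX1 : X *ᵥ 1 = -1) :
    (fromBlocks 𝟏 X 0 (-(Cᵀ * X)) : Matrix (ι ⊕ ι) (Fin 1 ⊕ ι) ℝ) *ᵥ 1 = 0 := by
  rw [fromBlocks_mulVec, Pi.one_comp, Pi.one_comp, ones_mulVec_one, hX1, zero_mulVec, neg_mulVec,
    ← mulVec_mulVec, hX1, mulVec_neg, neg_neg, mulVec_transpose, hcol, Fintype.card_fin,
    Nat.cast_one, one_smul, add_neg_cancel, zero_add, Sum.elim_zero_zero]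

variable [DecidableEq ι]

lemma isUnit_det_mul_transpose_add_one (C : Matrix ι ι ℝ) : IsUnit (C * Cᵀ + 1).det := by
  have hC : (C * Cᴴ).PosSemidef := posSemidef_self_mul_conjTranspose C
  rw [conjTranspose_eq_transpose_of_trivial] at hC
  exact (isUnit_iff_isUnit_det _).mp (PosDef.posSemidef_add hC PosDef.one).isUnit

lemma mul_transpose_add_one_mulVec_one (hcol : 1 ᵥ* C = 0) : (C * Cᵀ + 1) *ᵥ 1 = 1 := by
  rw [add_mulVec, ← mulVec_mulVec, mulVec_transpose, hcol, mulVec_zero, zero_add, one_mulVec]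

lemma inv_mul_transpose_add_one_mulVec_one (hcol : 1 ᵥ* C = 0) :
    (C * Cᵀ + 1)⁻¹ *ᵥ 1 = 1 := by
  conv_lhs => rw [← mul_transpose_add_one_mulVec_one hcol]
  rw [mulVec_mulVec, nonsing_inv_mul _ (isUnit_det_mul_transpose_add_one C), one_mulVec]

lemma inv_mul_transpose_add_one_mul_ones_sub (hcol : 1 ᵥ* C = 0) (n : ℝ) :
    (C * Cᵀ + 1)⁻¹ * (𝟏 - n • 1) = 𝟏 - n • (C * Cᵀ + 1)⁻¹ := by
  rw [Matrix.mul_sub, mul_ones, inv_mul_transpose_add_one_mulVec_one hcol, Matrix.mul_smul,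
    Matrix.mul_one]
  rfl

lemma one_vecMul_fromBlocks (hcol : 1 ᵥ* C = 0) :
    1 ᵥ* (fromBlocks 𝟏 0 (-1) C : Matrix (Fin 1 ⊕ ι) (ι ⊕ ι) ℝ) = 0 := by
  rw [vecMul_fromBlocks, Pi.one_comp, Pi.one_comp, one_vecMul_ones, vecMul_neg, vecMul_one,
    vecMul_zero, hcol, Fintype.card_fin, Nat.cast_one, one_smul, add_neg_cancel, add_zero,
    Sum.elim_zero_zero]

lemma fromBlocks_mul_fromBlocks_eq {n : ℝ} (hn : n = Fintype.card ι + 1) (hXT : Xᵀ = X)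
    (hX1 : X *ᵥ 1 = -1) (hAX : (C * Cᵀ + 1) * X = 𝟏 - n • 1) :
    (fromBlocks 𝟏 0 (-1) C : Matrix (Fin 1 ⊕ ι) (ι ⊕ ι) ℝ) *
      (fromBlocks 𝟏 X 0 (-(Cᵀ * X)) : Matrix (ι ⊕ ι) (Fin 1 ⊕ ι) ℝ) = n • 1 - 𝟏 := by
  rw [sub_eq_add_neg, ← fromBlocks_one, ← fromBlocks_ones, fromBlocks_smul, fromBlocks_neg,
    fromBlocks_add, fromBlocks_multiply, fromBlocks_inj]
  refine ⟨?_, ?_, ?_, ?_⟩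
  · ext i j
    simp [ones_mul_ones, hn, Subsingleton.elim i j]
  · rw [ones_mul, ← mulVec_transpose, hXT, hX1, Matrix.zero_mul, add_zero, smul_zero, zero_add]
    rfl
  · simp
  · rw [Matrix.add_mul, Matrix.one_mul, Matrix.mul_assoc] at hAX
    rw [Matrix.mul_neg, Matrix.neg_mul, Matrix.one_mul, add_comm, ← neg_add, hAX, neg_sub,
      sub_eq_add_neg]

lemma isSymm_fromBlocks_mul_fromBlocks (hXT : Xᵀ = X) :
    ((fromBlocks 𝟏 X 0 (-(Cᵀ * X)) : Matrix (ι ⊕ ι) (Fin 1 ⊕ ι) ℝ) *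
      (fromBlocks 𝟏 0 (-1) C : Matrix (Fin 1 ⊕ ι) (ι ⊕ ι) ℝ)).IsSymm := by
  rw [Matrix.IsSymm, fromBlocks_multiply, fromBlocks_transpose]
  simp [transpose_mul, hXT, Matrix.mul_assoc, ones_mul_ones, transpose_ones]

theorem isMoorePenroseInverse_cone {n : ℝ} (hn : n = Fintype.card ι + 1) (hcol : 1 ᵥ* C = 0)
    (hX : X = (C * Cᵀ + 1)⁻¹ * (𝟏 - n • 1)) :
    IsMoorePenroseInverse (fromBlocks 𝟏 0 (-1) C : Matrix (Fin 1 ⊕ ι) (ι ⊕ ι) ℝ)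
      ((1 / n) • (fromBlocks 𝟏 X 0 (-(Cᵀ * X)) : Matrix (ι ⊕ ι) (Fin 1 ⊕ ι) ℝ)) := by
  have hAX : (C * Cᵀ + 1) * X = 𝟏 - n • 1 := by
    rw [hX, mul_nonsing_inv_cancel_left _ _ (isUnit_det_mul_transpose_add_one C)]
  rw [inv_mul_transpose_add_one_mul_ones_sub hcol] at hX
  have hXT : Xᵀ = X := by
    rw [hX, transpose_sub, transpose_smul, transpose_nonsing_inv, transpose_add, transpose_mul,
      transpose_transpose, transpose_one, transpose_ones]
  have hX1 : X *ᵥ 1 = -1 := by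
    rw [hX, sub_mulVec, ones_mulVec_one, smul_mulVec, inv_mul_transpose_add_one_mulVec_one hcol, hn]
    module
  have hn0 : n ≠ 0 := by rw [hn]; positivity
  have hNB := fromBlocks_mul_fromBlocks_eq hn hXT hX1 hAX
  have h1N : (𝟏 : Matrix (Fin 1 ⊕ ι) (Fin 1 ⊕ ι) ℝ) *
      (fromBlocks 𝟏 0 (-1) C : Matrix (Fin 1 ⊕ ι) (ι ⊕ ι) ℝ) = 0 := by
    rw [ones_mul, one_vecMul_fromBlocks hcol]; rfl
  have hB1 : (fromBlocks 𝟏 X 0 (-(Cᵀ * X)) : Matrix (ι ⊕ ι) (Fin 1 ⊕ ι) ℝ) *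
      (𝟏 : Matrix (Fin 1 ⊕ ι) (Fin 1 ⊕ ι) ℝ) = 0 := by
    rw [mul_ones, fromBlocks_mulVec_one hcol hX1]; rfl
  refine ⟨?_, ?_, ?_, ?_⟩
  · rw [Matrix.mul_smul, hNB, Matrix.smul_mul, Matrix.sub_mul, Matrix.smul_mul, Matrix.one_mul,
      h1N, sub_zero, one_div, inv_smul_smul₀ hn0]
  · rw [Matrix.mul_assoc, Matrix.mul_smul _ (1 / n), hNB, Matrix.mul_smul, Matrix.smul_mul,
      Matrix.mul_sub, Matrix.mul_smul, Matrix.mul_one, hB1, sub_zero, one_div, inv_smul_smul₀ hn0]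
  · rw [Matrix.mul_smul, hNB, transpose_smul, transpose_sub, transpose_smul, transpose_one,
      transpose_ones]
  · rw [Matrix.smul_mul, transpose_smul, (isSymm_fromBlocks_mul_fromBlocks hXT).eq]

end Cone

lemma one_vecMul_circ {m : ℕ} [NeZero m] (v : Fin m → ℝ) : 1 ᵥ* circ v = fun _ => ∑ k, v k := by
  ext j
  simp only [vecMul, dotProduct, circ, Pi.one_apply, one_mul, of_apply]
  exact Fintype.sum_equiv (Equiv.subLeft j) _ _ fun _ => rfl

lemma sum_ite_val_eq_zero_ite_val_eq {m j : ℕ} (hj0 : 0 < j) (hjm : j < m) :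
    ∑ k : Fin m, (if k.val = 0 then (1 : ℝ) else if k.val = j then -1 else 0) = 0 := by
  rw [Fin.sum_univ_eq_sum_range (fun k => if k = 0 then (1 : ℝ) else if k = j then -1 else 0),
    Finset.sum_eq_add_of_mem 0 j (by simp; omega) (by simpa using hjm) hj0.ne
      fun k _ hk => by simp [hk.1, hk.2]]
  simp [hj0.ne']

theorem wheel_oriented_incidence_moore_penrose (n : ℕ) (hn : 4 ≤ n)
    (C X Y : Matrix (Fin (n-1)) (Fin (n-1)) ℝ)
    (hC : C = circ (fun k => if k.val = 0 then (1:ℝ) else if k.val = n - 2 then -1 else 0))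
    (hX : X = (C * Cᵀ + 1)⁻¹ * (Jmat (n-1) - (n:ℝ) • (1 : Matrix (Fin (n-1)) (Fin (n-1)) ℝ)))
    (hY : Y = -(Cᵀ * X))
    (N : Matrix (Fin 1 ⊕ Fin (n-1)) (Fin (n-1) ⊕ Fin (n-1)) ℝ)
    (hN : N = Matrix.fromBlocks (Matrix.of fun _ _ => 1) 0 (-1) C)
    (H : Matrix (Fin (n-1) ⊕ Fin (n-1)) (Fin 1 ⊕ Fin (n-1)) ℝ)
    (hH : H = (1 / (n:ℝ)) •
      Matrix.fromBlocks (Matrix.of fun _ _ => 1) X 0 Y) :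
    N * H * N = N ∧ H * N * H = H ∧ (N * H)ᵀ = N * H ∧ (H * N)ᵀ = H * N := by
  have : NeZero (n - 1) := ⟨by omega⟩
  have hcol : 1 ᵥ* C = 0 := by
    rw [hC, one_vecMul_circ, sum_ite_val_eq_zero_ite_val_eq (by omega) (by omega)]
    rfl
  have hcard : (n : ℝ) = Fintype.card (Fin (n - 1)) + 1 := by
    rw [Fintype.card_fin, Nat.cast_sub (by omega), Nat.cast_one, sub_add_cancel]
  subst hY hN hH
  exact isMoorePenroseInverse_cone hcard hcol hX
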